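/- A nonempty prefix-closed language K ⊆ L is P-observable under an insertion-removal attack set 𝒜 = {A_{α₁}, ..., A_{α_M}} if and only if K is (R_{¬α}∘P)-observable (in the standard, non-attacked sense) for every set α = α_i ∪ α_j with i, j ∈ {1,...,M}. -/
import Mathlib


variable {S D : Type*} [DecidableEq D]

/-- A language is prefix closed. -/
def PrefixClosed (L : Set (List S)) : Prop := ∀ u v : List S, u ++ v ∈ L → u ∈ L

/-- `P : Σ* → Δ*` is an observation map. -/
def IsObsMap (P : List S → List D) : Prop :=
  P [] = [] ∧ (∀ w s : List S, P (w ++ s) = P w ++ P s) ∧ ∀ σ : S, (P [σ]).length ≤ 1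

/-- The `α`-removal map `R_{¬α}` erases all symbols in `α`. -/
def Rrem (α : Finset D) (v : List D) : List D := v.filter (fun t => decide (t ∉ α))

/-- The insertion-removal attack `A_α(u) = {v : R_{¬α}(u) = R_{¬α}(v)}`. -/
def Ains (α : Finset D) (u : List D) : Set (List D) := {v | Rrem α u = Rrem α v}

/-- `K` is `Q`-observable with respect to `L` in the standard (non-attacked) sense. -/
def QObservable (L K : Set (List S)) (Q : List S → List D) : Prop :=
  ∀ w ∈ K, ∀ w' ∈ K, Q w = Q w' →
    ∀ σ : S, ¬((w ++ [σ] ∈ K ∧ w' ++ [σ] ∈ L \ K) ∨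
               (w ++ [σ] ∈ L \ K ∧ w' ++ [σ] ∈ K))

lemma Rrem_Rrem (αi αj : Finset D) (l : List D) :
    Rrem αj (Rrem αi l) = Rrem (αi ∪ αj) l := by
  simp [Rrem, List.filter_filter]
  congr 1
  ext t
  by_cases h1 : t ∈ αi <;> by_cases h2 : t ∈ αj <;> simp [h1, h2]

lemma filt_pos (α : Finset D) {t : D} (h : t ∉ α) (l : List D) :
    (t :: l).filter (fun x => decide (x ∉ α)) = t :: l.filter (fun x => decide (x ∉ α)) := by
  rw [List.filter_cons, if_pos (by simpa using h)]

lemma filt_neg (α : Finset D) {t : D} (h : t ∈ α) (l : List D) :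
    (t :: l).filter (fun x => decide (x ∉ α)) = l.filter (fun x => decide (x ∉ α)) := by
  rw [List.filter_cons, if_neg (by simpa using h)]

lemma exists_merge (αi αj : Finset D) :
    ∀ n (a b : List D), a.length + b.length ≤ n →
    (∀ t ∈ a, t ∉ αi) → (∀ t ∈ b, t ∉ αj) →
    a.filter (fun t => decide (t ∉ αj)) = b.filter (fun t => decide (t ∉ αi)) →
    ∃ v : List D, v.filter (fun t => decide (t ∉ αi)) = a ∧
      v.filter (fun t => decide (t ∉ αj)) = b := by
  intro n
  induction n with
  | zero =>
    intro a b hn _ _ _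
    have h1 : a = [] := List.eq_nil_of_length_eq_zero (by omega)
    have h2 : b = [] := List.eq_nil_of_length_eq_zero (by omega)
    exact ⟨[], by simp [h1, h2]⟩
  | succ n ih =>
    intro a b hn ha hb h
    match a, b with
    | [], b =>
      simp only [List.filter_nil] at h
      have hbi : ∀ t ∈ b, t ∈ αi := by
        intro t ht
        by_contra hc
        have := List.filter_eq_nil_iff.mp h.symm t ht
        simp [hc] at this
      refine ⟨b, ?_, ?_⟩
      · exact List.filter_eq_nil_iff.mpr (fun t ht => by simp [hbi t ht])
      · exact List.filter_eq_self.mpr (fun t ht => by simp [hb t ht])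
    | t :: a', [] =>
      simp only [List.filter_nil] at h
      have hai : ∀ x ∈ t :: a', x ∈ αj := by
        intro x hx
        by_contra hc
        have := List.filter_eq_nil_iff.mp h x hx
        simp [hc] at this
      refine ⟨t :: a', ?_, ?_⟩
      · exact List.filter_eq_self.mpr (fun x hx => by simp [ha x hx])
      · exact List.filter_eq_nil_iff.mpr (fun x hx => by simp [hai x hx])
    | t :: a', s :: b' =>
      simp only [List.length_cons] at hn
      have hti : t ∉ αi := ha t (by simp)
      have hsj : s ∉ αj := hb s (by simp)
      by_cases htj : t ∈ αj
      · rw [filt_neg αj htj] at h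
        obtain ⟨v, hv1, hv2⟩ := ih a' (s :: b') (by simp; omega)
          (fun x hx => ha x (by simp [hx])) hb h
        exact ⟨t :: v, by rw [filt_pos αi hti, hv1], by rw [filt_neg αj htj, hv2]⟩
      · by_cases hsi : s ∈ αi
        · rw [filt_neg αi hsi] at h
          obtain ⟨v, hv1, hv2⟩ := ih (t :: a') b' (by simp; omega) ha
            (fun x hx => hb x (by simp [hx])) h
          exact ⟨s :: v, by rw [filt_neg αi hsi, hv1], by rw [filt_pos αj hsj, hv2]⟩
        · rw [filt_pos αj htj, filt_pos αi hsi] at h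
          obtain ⟨hts, h'⟩ := List.cons_eq_cons.mp h
          obtain ⟨v, hv1, hv2⟩ := ih a' b' (by omega)
            (fun x hx => ha x (by simp [hx]))
            (fun x hx => hb x (by simp [hx])) h'
          subst hts
          exact ⟨t :: v, by rw [filt_pos αi hti, hv1], by rw [filt_pos αj htj, hv2]⟩

/-- Key: the intersection of attacks is nonempty iff the joint removals agree. -/
lemma ains_inter_nonempty (αi αj : Finset D) (x y : List D) :
    (Ains αi x ∩ Ains αj y).Nonempty ↔ Rrem (αi ∪ αj) x = Rrem (αi ∪ αj) y := by
  constructor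
  · rintro ⟨v, hvi, hvj⟩
    have h1 : Rrem αi x = Rrem αi v := hvi
    have h2 : Rrem αj y = Rrem αj v := hvj
    calc Rrem (αi ∪ αj) x = Rrem αj (Rrem αi x) := (Rrem_Rrem _ _ _).symm
      _ = Rrem αj (Rrem αi v) := by rw [h1]
      _ = Rrem (αi ∪ αj) v := Rrem_Rrem _ _ _
      _ = Rrem αi (Rrem αj v) := by rw [Rrem_Rrem αj αi v]; rw [Finset.union_comm]
      _ = Rrem αi (Rrem αj y) := by rw [h2]
      _ = Rrem (αj ∪ αi) y := Rrem_Rrem _ _ _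
      _ = Rrem (αi ∪ αj) y := by rw [Finset.union_comm]
  · intro h
    set a := Rrem αi x with hax
    set b := Rrem αj y with hby
    have ha : ∀ t ∈ a, t ∉ αi := by
      intro t ht
      have := List.of_mem_filter ht
      simpa using this
    have hb : ∀ t ∈ b, t ∉ αj := by
      intro t ht
      have := List.of_mem_filter ht
      simpa using this
    have hab : a.filter (fun t => decide (t ∉ αj)) = b.filter (fun t => decide (t ∉ αi)) := by
      have e1 : a.filter (fun t => decide (t ∉ αj)) = Rrem (αi ∪ αj) x := Rrem_Rrem αi αj x
      have e2 : b.filter (fun t => decide (t ∉ αi)) = Rrem (αj ∪ αi) y := Rrem_Rrem αj αi y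
      rw [e1, e2, Finset.union_comm αj αi]; exact h
    obtain ⟨v, hv1, hv2⟩ := exists_merge αi αj (a.length + b.length) a b le_rfl ha hb hab
    exact ⟨v, hv1.symm, hv2.symm⟩

/-- `K` is `P`-observable under the insertion-removal attack set
`{A_{α₁},…,A_{α_M}}` iff `K` is `(R_{¬(α_i ∪ α_j)} ∘ P)`-observable for all `i,j`. -/
theorem stmt9 (P : List S → List D) (hP : IsObsMap P)
    (L K : Set (List S)) (hKL : K ⊆ L) (hKne : K.Nonempty) (hK : PrefixClosed K)
    (hL : PrefixClosed L)
    (M : ℕ) (hM : 1 ≤ M) (α : Fin M → Finset D) :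
    (∀ w ∈ K, ∀ w' ∈ K,
        (∃ i j : Fin M, (Ains (α i) (P w) ∩ Ains (α j) (P w')).Nonempty) →
        ∀ σ : S, ¬((w ++ [σ] ∈ K ∧ w' ++ [σ] ∈ L \ K) ∨
                   (w ++ [σ] ∈ L \ K ∧ w' ++ [σ] ∈ K)))
      ↔ ∀ i j : Fin M, QObservable L K (fun w => Rrem (α i ∪ α j) (P w)) := by
  constructor
  · intro H i j w hw w' hw' hQ σ
    exact H w hw w' hw' ⟨i, j, (ains_inter_nonempty (α i) (α j) (P w) (P w')).mpr hQ⟩ σ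
  · intro H w hw w' hw' ⟨i, j, hne⟩ σ
    exact H i j w hw w' hw' ((ains_inter_nonempty (α i) (α j) (P w) (P w')).mp hne) σ
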